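/- arXiv:2505.08401 — 2 statements merged into one kernel-verified Lean document; each statement's English description precedes it below -/
import Mathlib

section
/- Let M' be a positive integer with M' ≡ 1 (mod 5), and let B = [[2M' + 1, −2], [−M', 1]] (an integer matrix of determinant 1). Let γ = [[5x, y], [M'z, 5w]] be an integer matrix of determinant 1 (so 25xw − M'yz = 1). Set E = B·γ·B^{-1}. Then either both diagonal entries E₀₀ and E₁₁ are divisible by 5, or both off-diagonal entries E₀₁ and E₁₀ are divisible by 5. -/
lemma zmod5_key2 (m a u v b : ZMod 5) (hm : m = 1) (hd : u * v = -1) :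
    (m*a*10 - m*v*2 + (m*u - m*b*10) + m^2*u*2 + a*5 = 0 ∧
     -(m*a*10) + (m*v*2 - m*u) + (m*b*10 - m^2*u*2) + b*5 = 0) ∨
    (m*a*20 - m*v*4 + (m*u*4 - m*b*20) + m^2*u*4 + a*10 + (u - b*10) = 0 ∧
     -(m*a*5) + m*v + (m*b*5 - m^2*u) = 0) := by
  subst hm
  revert hd; revert a u v b; decide

theorem stmt_17 (M' x y z w : ℤ) (hM : 0 < M') (hM5 : M' ≡ 1 [ZMOD 5])
    (hdet : 25 * x * w - M' * y * z = 1) :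
    (5 ∣ (!![2 * M' + 1, -2; -M', 1] * !![5 * x, y; M' * z, 5 * w] *
          !![1, 2; M', 2 * M' + 1]) 0 0 ∧
     5 ∣ (!![2 * M' + 1, -2; -M', 1] * !![5 * x, y; M' * z, 5 * w] *
          !![1, 2; M', 2 * M' + 1]) 1 1) ∨
    (5 ∣ (!![2 * M' + 1, -2; -M', 1] * !![5 * x, y; M' * z, 5 * w] *
          !![1, 2; M', 2 * M' + 1]) 0 1 ∧
     5 ∣ (!![2 * M' + 1, -2; -M', 1] * !![5 * x, y; M' * z, 5 * w] *
          !![1, 2; M', 2 * M' + 1]) 1 0) := by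
  have hm : ((M' : ℤ) : ZMod 5) = 1 := by
    have := (ZMod.intCast_eq_intCast_iff _ _ _).mpr hM5; simpa using this
  have h25 : (25 : ZMod 5) = 0 := by decide
  have h5 : (5 : ZMod 5) = 0 := by decide
  have hd : (y : ZMod 5) * z = -1 := by
    have h := congrArg (fun t : ℤ => (t : ZMod 5)) hdet
    push_cast at h
    linear_combination -h + (x * w : ZMod 5) * h25 - (y * z : ZMod 5) * hm
  simp only [Matrix.mul_fin_two, Matrix.of_apply, Fin.isValue, Matrix.cons_val', Matrix.cons_val_zero,
    Matrix.cons_val_one, Matrix.head_cons, Matrix.empty_val', Matrix.cons_val_fin_one,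
    Matrix.head_fin_const]
  have key := zmod5_key2 (M' : ZMod 5) x y z w hm hd
  have cast5 : ∀ a : ℤ, ((a : ZMod 5) = 0) → (5 : ℤ) ∣ a := by
    intro a ha
    exact_mod_cast (ZMod.intCast_zmod_eq_zero_iff_dvd a 5).mp ha
  rcases key with ⟨h1, h2⟩ | ⟨h1, h2⟩
  · left
    refine ⟨cast5 _ ?_, cast5 _ ?_⟩ <;> push_cast
    · linear_combination h1
    · linear_combination h2
  · right
    refine ⟨cast5 _ ?_, cast5 _ ?_⟩ <;> push_cast
    · linear_combination h1
    · linear_combination h2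
end

section
/- Let M' be a positive integer with M' ≡ 1 (mod 5), and let B = [[2M' + 1, −2], [−M', 1]]. Let δ = [[x, 5y], [5M'z, w]] be an integer matrix of determinant 1 (so xw − 25M'yz = 1). Set E = B·δ·B^{-1}. Then either both diagonal entries of E are divisible by 5, or both off-diagonal entries of E are divisible by 5. -/
lemma key5 (a b : ZMod 5) (h : a * b = 1) : a + b = 0 ∨ a - b = 0 := by
  revert h; revert a b; decide

theorem stmt_18 (M' x y z w : ℤ) (hM : 0 < M') (hM5 : M' ≡ 1 [ZMOD 5])
    (hdet : x * w - 25 * M' * y * z = 1) :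
    (5 ∣ (!![2 * M' + 1, -2; -M', 1] * !![x, 5 * y; 5 * M' * z, w] *
          !![1, 2; M', 2 * M' + 1]) 0 0 ∧
     5 ∣ (!![2 * M' + 1, -2; -M', 1] * !![x, 5 * y; 5 * M' * z, w] *
          !![1, 2; M', 2 * M' + 1]) 1 1) ∨
    (5 ∣ (!![2 * M' + 1, -2; -M', 1] * !![x, 5 * y; 5 * M' * z, w] *
          !![1, 2; M', 2 * M' + 1]) 0 1 ∧
     5 ∣ (!![2 * M' + 1, -2; -M', 1] * !![x, 5 * y; 5 * M' * z, w] *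
          !![1, 2; M', 2 * M' + 1]) 1 0) := by
  have hm : ((M' : ℤ) : ZMod 5) = 1 := by
    have := (ZMod.intCast_eq_intCast_iff' _ _ _).mpr hM5
    simpa using this
  have hab : (x : ZMod 5) * (w : ZMod 5) = 1 := by
    have : ((x * w - 25 * M' * y * z : ℤ) : ZMod 5) = ((1 : ℤ) : ZMod 5) := by
      rw [hdet]
    push_cast at this
    rw [hm] at this
    reduce_mod_char at this
    linear_combination this
  have hdvd : ∀ n : ℤ, ((n : ZMod 5) = 0) → (5 : ℤ) ∣ n := fun n h => by
    exact_mod_cast (ZMod.intCast_zmod_eq_zero_iff_dvd n 5).mp h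
  rw [Matrix.mul_fin_two, Matrix.mul_fin_two]
  simp only [Matrix.cons_val_zero, Matrix.cons_val_one, Matrix.head_cons, Matrix.of_apply, Matrix.cons_val', Matrix.empty_val', Matrix.cons_val_fin_one, Matrix.vecHead, Matrix.vecTail]
  have h5 : (5 : ZMod 5) = 0 := by decide
  rcases key5 _ _ hab with h | h
  · left
    constructor <;> (apply hdvd; push_cast; rw [hm]; reduce_mod_char)
    · linear_combination 3 * h
    · linear_combination 3 * h + (x : ZMod 5) * h5
  · right
    constructor <;> (apply hdvd; push_cast; rw [hm]; reduce_mod_char)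
    · linear_combination h + ((x : ZMod 5) + 2 * (w : ZMod 5)) * h5
    · linear_combination -h + (x : ZMod 5) * h5
end
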